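/- Weight-ordering is preserved under adjoining a part: let Γ > Λ in the weight ordering of N=2 superpartitions of the same sector, and let a part Λ_{L+1} with w(Λ_{L+1}) ≤ w(Λ_L) be inserted into both (into Γ at the rightmost admissible position). Then Γ⁺ = Γ ∪ (Λ_{L+1}) > Λ⁺ = Λ ∪ (Λ_{L+1}). -/

import Mathlib

/-- A part of an `N=2` superpartition: plain, overlined, underlined or bilined,
with a nonnegative integer value. -/
inductive SPart where
  | plain (a : ℕ)
  | bar (a : ℕ)
  | und (a : ℕ)
  | bil (a : ℕ)
deriving DecidableEq

/-- The weight of a part: `w(a) = a`, `w(ā) = w(a̲) = a + 1/2`, `w(a̿) = a + 1`. -/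
def SPart.weight : SPart → ℚ
  | .plain a => a
  | .bar a => a + 1/2
  | .und a => a + 1/2
  | .bil a => a + 1

/-- The `n`-th partial sum of weights of a list of parts (missing parts contribute `0`). -/
def wPartial (L : List SPart) (n : ℕ) : ℚ := ((L.take n).map SPart.weight).sum

/-- The weight ordering: `Λ <w Γ` iff every partial weight sum of `Γ` dominates that of `Λ`,
with at least one strict domination. -/
def wLt (Λ Γ : List SPart) : Prop :=
  (∀ n, wPartial Λ n ≤ wPartial Γ n) ∧ ∃ n, wPartial Λ n < wPartial Γ n

/-! Inserting `μ` in front of parts no heavier than `μ` can only raise the partial weight sums of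
`Γ`, so `Λ⁺ ≤ Γ⁺` holds up to index `ℓ(Λ)`, and the strict index of `Γ > Λ` survives. Positivity
of the parts of `Γ` forces `ℓ(Γ) ≤ ℓ(Λ)`; beyond index `ℓ(Λ)` both `Λ⁺` and `Γ⁺` have reached
their common total weight. -/

lemma SPart.weight_nonneg (p : SPart) : 0 ≤ p.weight := by
  cases p <;> simp only [SPart.weight] <;> positivity

@[simp]
lemma wPartial_zero (L : List SPart) : wPartial L 0 = 0 := by
  simp [wPartial]

@[simp]
lemma wPartial_nil (n : ℕ) : wPartial [] n = 0 := by
  simp [wPartial]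

@[simp]
lemma wPartial_cons_succ (p : SPart) (L : List SPart) (n : ℕ) :
    wPartial (p :: L) (n + 1) = p.weight + wPartial L n := by
  simp [wPartial]

lemma wPartial_add_sum_drop (L : List SPart) (n : ℕ) :
    wPartial L n + ((L.drop n).map SPart.weight).sum = (L.map SPart.weight).sum := by
  rw [wPartial, ← List.sum_append, ← List.map_append, List.take_append_drop]

lemma wPartial_le_sum (L : List SPart) (n : ℕ) :
    wPartial L n ≤ (L.map SPart.weight).sum := by
  rw [← wPartial_add_sum_drop L n, le_add_iff_nonneg_right]
  exact List.sum_nonneg (List.forall_mem_map.mpr fun p _ => p.weight_nonneg)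

lemma wPartial_lt_sum {L : List SPart} (hpos : ∀ p ∈ L, 0 < p.weight) {n : ℕ}
    (hn : n < L.length) : wPartial L n < (L.map SPart.weight).sum := by
  rw [← wPartial_add_sum_drop L n, lt_add_iff_pos_right]
  refine List.sum_pos _ (List.forall_mem_map.mpr fun p hp => hpos p (List.mem_of_mem_drop hp)) ?_
  simpa using hn

lemma wPartial_of_length_le {L : List SPart} {n : ℕ} (hn : L.length ≤ n) :
    wPartial L n = (L.map SPart.weight).sum := by
  rw [wPartial, List.take_of_length_le hn]

lemma lt_length_of_wPartial_lt_sum {L : List SPart} {n : ℕ}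
    (h : wPartial L n < (L.map SPart.weight).sum) : n < L.length := by
  by_contra hn
  exact h.ne (wPartial_of_length_le (not_lt.mp hn))

lemma wPartial_append_of_le_length {L M : List SPart} {n : ℕ} (hn : n ≤ L.length) :
    wPartial (L ++ M) n = wPartial L n := by
  rw [wPartial, wPartial, List.take_append_of_le_length hn]

lemma length_le_of_wPartial_le {Γ Λ : List SPart} (hpos : ∀ p ∈ Γ, 0 < p.weight)
    (hsum : (Γ.map SPart.weight).sum = (Λ.map SPart.weight).sum)
    (hle : wPartial Λ Λ.length ≤ wPartial Γ Λ.length) : Γ.length ≤ Λ.length := by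
  by_contra h
  have := wPartial_lt_sum hpos (not_le.mp h)
  rw [wPartial_of_length_le le_rfl] at hle
  linarith

lemma wPartial_succ_le_add {L : List SPart} {μ : SPart} (hμ : ∀ p ∈ L, p.weight ≤ μ.weight)
    (n : ℕ) : wPartial L (n + 1) ≤ μ.weight + wPartial L n := by
  induction L generalizing n with
  | nil => simp [μ.weight_nonneg]
  | cons q L ih =>
    cases n with
    | zero => simpa using hμ q List.mem_cons_self
    | succ n =>
      have := ih (fun p hp => hμ p (List.mem_cons_of_mem q hp)) n
      simp only [wPartial_cons_succ]
      linarith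

lemma wPartial_le_wPartial_insert (A : List SPart) {B : List SPart} {μ : SPart}
    (hμ : ∀ p ∈ B, p.weight ≤ μ.weight) (n : ℕ) :
    wPartial (A ++ B) n ≤ wPartial (A ++ μ :: B) n := by
  induction A generalizing n with
  | nil =>
    cases n with
    | zero => simp
    | succ n => simpa using wPartial_succ_le_add hμ n
  | cons a A ih =>
    cases n with
    | zero => simp
    | succ n => simpa using ih n

lemma weight_le_of_mem_of_head?_lt {L : List SPart}
    (hsort : L.Pairwise (fun p q => SPart.weight q ≤ SPart.weight p)) {μ : SPart}
    (hhead : ∀ p ∈ L.head?, SPart.weight p < SPart.weight μ) :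
    ∀ p ∈ L, p.weight ≤ μ.weight := by
  cases L with
  | nil => simp
  | cons q L =>
    have hq : q.weight < μ.weight := hhead q rfl
    intro p hp
    rcases List.mem_cons.mp hp with rfl | hp
    · exact hq.le
    · exact (List.rel_of_pairwise_cons hsort hp).trans hq.le

lemma sum_map_weight_insert (L : List SPart) (μ : SPart) (k : ℕ) :
    ((L.take k ++ μ :: L.drop k).map SPart.weight).sum = (L.map SPart.weight).sum + μ.weight := by
  rw [(List.perm_middle.map _).sum_eq, List.take_append_drop, List.map_cons, List.sum_cons,
    add_comm]

theorem wLt_insert_part_general (Γ Λ : List SPart) (μ : SPart) (k : ℕ)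
    -- parts are listed with non-increasing weights
    (hΓsort : Γ.Pairwise (fun p q => SPart.weight q ≤ SPart.weight p))
    -- all parts have positive weight (plain zero parts are disregarded)
    (hΓpos : ∀ p ∈ Γ, 0 < SPart.weight p)
    -- same sector: equal total weights
    (hsector : (Γ.map SPart.weight).sum = (Λ.map SPart.weight).sum)
    -- Γ > Λ in the weight ordering
    (hlt : wLt Λ Γ)
    (hright : ∀ p ∈ (Γ.drop k).head?, SPart.weight p < SPart.weight μ) :
    wLt (Λ ++ [μ]) (Γ.take k ++ μ :: Γ.drop k) := by
  obtain ⟨hle, n₀, hn₀⟩ := hlt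
  have hlen : Γ.length ≤ Λ.length := length_le_of_wPartial_le hΓpos hsector (hle _)
  have hins (n : ℕ) : wPartial Γ n ≤ wPartial (Γ.take k ++ μ :: Γ.drop k) n := by
    simpa only [List.take_append_drop] using wPartial_le_wPartial_insert (Γ.take k)
      (weight_le_of_mem_of_head?_lt (hΓsort.drop (i := k)) hright) n
  refine ⟨fun n => ?_, n₀, ?_⟩
  · rcases le_or_gt n Λ.length with hn | hn
    · rw [wPartial_append_of_le_length hn]
      exact (hle n).trans (hins n)
    · have hlen_insert : (Γ.take k ++ μ :: Γ.drop k).length ≤ n := by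
        simp only [List.length_append, List.length_cons, List.length_take, List.length_drop]
        omega
      rw [wPartial_of_length_le (by simpa using hn), wPartial_of_length_le hlen_insert,
        sum_map_weight_insert, List.map_append, List.sum_append, hsector, List.map_singleton,
        List.sum_singleton]
  · have hn₀Λ : n₀ < Λ.length :=
      lt_length_of_wPartial_lt_sum (hsector ▸ hn₀.trans_le (wPartial_le_sum Γ n₀))
    rw [wPartial_append_of_le_length hn₀Λ.le]
    exact hn₀.trans_le (hins n₀)

/-- Weight-ordering is preserved under adjoining a part: if `Γ > Λ` in the weight ordering,
both in the same sector, and a part `μ` with `w(μ) ≤ w(Λ_L)` is appended to `Λ` and inserted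
into `Γ` at the rightmost admissible position (position `k`, so that `w(μ) > w(Γ_k)` for the
following part `Γ_k`, if any), then `Γ⁺ > Λ⁺`. -/
theorem wLt_insert_part (Γ Λ : List SPart) (μ : SPart) (k : ℕ)
    -- parts are listed with non-increasing weights
    (hΓsort : Γ.Pairwise (fun p q => SPart.weight q ≤ SPart.weight p))
    (hΛsort : Λ.Pairwise (fun p q => SPart.weight q ≤ SPart.weight p))
    -- all parts have positive weight (plain zero parts are disregarded)
    (hΓpos : ∀ p ∈ Γ, 0 < SPart.weight p)
    (hΛpos : ∀ p ∈ Λ, 0 < SPart.weight p)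
    -- same sector: equal total weights
    (hsector : (Γ.map SPart.weight).sum = (Λ.map SPart.weight).sum)
    -- Γ > Λ in the weight ordering
    (hlt : wLt Λ Γ)
    -- the new part is no heavier than the last part of Λ, i.e. Λ ++ [μ] is still sorted
    (hμΛ : (Λ ++ [μ]).Pairwise (fun p q => SPart.weight q ≤ SPart.weight p))
    -- μ is inserted into Γ at position k, the rightmost admissible one
    (hk : k ≤ Γ.length)
    (hΓplus : (Γ.take k ++ μ :: Γ.drop k).Pairwise (fun p q => SPart.weight q ≤ SPart.weight p))
    (hright : ∀ p ∈ (Γ.drop k).head?, SPart.weight p < SPart.weight μ) :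
    wLt (Λ ++ [μ]) (Γ.take k ++ μ :: Γ.drop k) :=
  wLt_insert_part_general Γ Λ μ k hΓsort hΓpos hsector hlt hright
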